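/- Let G be a connected graph with minimum degree at least 2 that is not an even cycle and in which no edge connects two vertices of degree at least 3. If G' is obtained from G by subdividing one edge once, then ν₂(G') ≥ ν₂(G) + 1. -/

import Mathlib

structure Multigraph where
  V : Type
  E : Type
  fintypeV : Fintype V
  decEqV : DecidableEq V
  fintypeE : Fintype E
  decEqE : DecidableEq E
  ends : E → Sym2 V

attribute [instance] Multigraph.fintypeV Multigraph.decEqV Multigraph.fintypeE Multigraph.decEqE

namespace Multigraph

/-- `e` is a loop if both of its endpoints coincide. -/
def IsLoop (G : Multigraph) (e : G.E) : Prop := (G.ends e).IsDiag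

/-- A loopless multigraph. -/
def Loopless (G : Multigraph) : Prop := ∀ e, ¬ G.IsLoop e

/-- Degree of a vertex: loops count twice. -/
def deg (G : Multigraph) (v : G.V) : ℕ :=
  ∑ e : G.E, (if G.ends e = Sym2.diag v then 2 else if v ∈ G.ends e then 1 else 0)

/-- Adjacency via some edge. -/
def Adj (G : Multigraph) (u v : G.V) : Prop := ∃ e, G.ends e = s(u, v)

/-- Connectivity. -/
def Connected (G : Multigraph) : Prop := ∀ u v : G.V, Relation.ReflTransGen G.Adj u v

/-- A matching: a set of non-loop edges no two of which share an endpoint. -/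
def IsMatching (G : Multigraph) (M : Finset G.E) : Prop :=
  (∀ e ∈ M, ¬ G.IsLoop e) ∧
  ∀ e ∈ M, ∀ f ∈ M, e ≠ f → ∀ v : G.V, v ∈ G.ends e → v ∉ G.ends f

/-- A maximum matching. -/
def IsMaximumMatching (G : Multigraph) (M : Finset G.E) : Prop :=
  G.IsMatching M ∧ ∀ M' : Finset G.E, G.IsMatching M' → M'.card ≤ M.card

/-- `v` is saturated by `M`. -/
def Saturated (G : Multigraph) (M : Finset G.E) (v : G.V) : Prop :=
  ∃ e ∈ M, v ∈ G.ends e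

/-- Size of a maximum matching. -/
noncomputable def nu1 (G : Multigraph) : ℕ :=
  sSup {m | ∃ M : Finset G.E, G.IsMatching M ∧ M.card = m}

/-- Max number of edges coverable by two disjoint matchings. -/
noncomputable def nu2 (G : Multigraph) : ℕ :=
  sSup {m | ∃ H H' : Finset G.E, G.IsMatching H ∧ G.IsMatching H' ∧
    Disjoint H H' ∧ H.card + H'.card = m}

/-- Max number of edges coverable by three pairwise disjoint matchings. -/
noncomputable def nu3 (G : Multigraph) : ℕ :=
  sSup {m | ∃ H₁ H₂ H₃ : Finset G.E, G.IsMatching H₁ ∧ G.IsMatching H₂ ∧ G.IsMatching H₃ ∧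
    Disjoint H₁ H₂ ∧ Disjoint H₁ H₃ ∧ Disjoint H₂ H₃ ∧ H₁.card + H₂.card + H₃.card = m}

/-- Subdividing the edge `e`, with endpoints `u`, `v`, once: replace it by a path `u - w - v`
through a new vertex `w`. -/
def subdivideOnce (G : Multigraph) (e : G.E) (u v : G.V) : Multigraph where
  V := G.V ⊕ Unit
  E := {f : G.E // f ≠ e} ⊕ Bool
  fintypeV := inferInstance
  decEqV := inferInstance
  fintypeE := inferInstance
  decEqE := inferInstance
  ends := fun f =>
    match f with
    | Sum.inl ⟨f, _⟩ => (G.ends f).map Sum.inl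
    | Sum.inr true => s(Sum.inl u, Sum.inr ())
    | Sum.inr false => s(Sum.inl v, Sum.inr ())

/-- Subdividing every edge `e` exactly `k e` times, where `fst`/`snd` pick out the endpoints
of every edge. The edge `e` is replaced by the path
`fst e, (e,0), (e,1), …, (e, k e - 1), snd e` of length `k e + 1`. -/
def subdivide (G : Multigraph) (fst snd : G.E → G.V) (k : G.E → ℕ) : Multigraph where
  V := G.V ⊕ (Σ e : G.E, Fin (k e))
  E := Σ e : G.E, Fin (k e + 1)
  fintypeV := inferInstance
  decEqV := inferInstance
  fintypeE := inferInstance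
  decEqE := inferInstance
  ends := fun f =>
    s( if h : f.2.val = 0 then Sum.inl (fst f.1)
       else Sum.inr ⟨f.1, ⟨f.2.val - 1, by omega⟩⟩,
       if h : f.2.val = k f.1 then Sum.inl (snd f.1)
       else Sum.inr ⟨f.1, ⟨f.2.val, by have := f.2.isLt; omega⟩⟩ )

/-!
Take disjoint matchings `H, H'` of `G` with `|H| + |H'| = ν₂(G)`; subdividing `e = uv` by a new
vertex `w` replaces `e` by the path `u, w, v`. If `e ∉ H ∪ H'`, an endpoint of `e` of degree `2`
misses `H` or `H'`, and the new edge at it joins that matching. If `e ∈ H`, follow the maximal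
path from `v` that alternates between `H'` and `H - e`. If it avoids `u`, recolouring the path
`u, w, v, …` alternately gains one edge. Otherwise the path and `e` form an even alternating
cycle `C`. As `G` is connected and not an even cycle, some vertex `b` of `C` has a third edge
`by`; no edge joins two vertices of degree at least `3`, so `y` lies off `C` and misses `H` or
`H'`. In the subdivision `C` becomes an odd cycle through `w`, and recolouring the path
`y, b, …` around it gains one edge over `C`.
-/

section Matching

variable {Γ : Multigraph} {M N : Finset Γ.E}

theorem IsMatching.eq_of_mem_ends (hM : Γ.IsMatching M) {d f : Γ.E} (hd : d ∈ M) (hf : f ∈ M)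
    {z : Γ.V} (hzd : z ∈ Γ.ends d) (hzf : z ∈ Γ.ends f) : d = f :=
  by_contra fun h => hM.2 d hd f hf h z hzd hzf

theorem IsMatching.mono (hM : Γ.IsMatching M) (h : N ⊆ M) : Γ.IsMatching N :=
  ⟨fun d hd => hM.1 d (h hd), fun d hd f hf => hM.2 d (h hd) f (h hf)⟩

theorem isMatching_empty : Γ.IsMatching ∅ := ⟨by simp, by simp⟩

theorem IsMatching.union (hM : Γ.IsMatching M) (hN : Γ.IsMatching N)
    (h : ∀ z, Γ.Saturated M z → ¬ Γ.Saturated N z) : Γ.IsMatching (M ∪ N) := by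
  refine ⟨fun d hd => (Finset.mem_union.1 hd).elim (hM.1 d) (hN.1 d), ?_⟩
  intro d hd f hf hdf z hzd hzf
  rcases Finset.mem_union.1 hd with hd | hd <;> rcases Finset.mem_union.1 hf with hf | hf
  · exact hM.2 d hd f hf hdf z hzd hzf
  · exact h z ⟨d, hd, hzd⟩ ⟨f, hf, hzf⟩
  · exact h z ⟨f, hf, hzf⟩ ⟨d, hd, hzd⟩
  · exact hN.2 d hd f hf hdf z hzd hzf

theorem Saturated.mono {z : Γ.V} (h : Γ.Saturated N z) (hNM : N ⊆ M) : Γ.Saturated M z :=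
  let ⟨d, hd, hz⟩ := h
  ⟨d, hNM hd, hz⟩

theorem not_mem_of_not_saturated {d : Γ.E} {z : Γ.V} (hz : z ∈ Γ.ends d)
    (h : ¬ Γ.Saturated M z) : d ∉ M :=
  fun hd => h ⟨d, hd, hz⟩

theorem not_saturated_sdiff {C : Finset Γ.E} {z : Γ.V} (h : ∀ f ∈ M, z ∈ Γ.ends f → f ∈ C) :
    ¬ Γ.Saturated (M \ C) z := by
  rintro ⟨f, hf, hzf⟩
  exact (Finset.mem_sdiff.1 hf).2 (h f (Finset.mem_sdiff.1 hf).1 hzf)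

theorem IsMatching.not_saturated_erase (hM : Γ.IsMatching M) {d : Γ.E} (hd : d ∈ M) {z : Γ.V}
    (hz : z ∈ Γ.ends d) : ¬ Γ.Saturated (M.erase d) z := by
  rintro ⟨f, hf, hzf⟩
  exact Finset.ne_of_mem_erase hf (hM.eq_of_mem_ends (Finset.mem_of_mem_erase hf) hd hzf hz)

theorem nu2_bddAbove (Γ : Multigraph) :
    BddAbove {m | ∃ H H' : Finset Γ.E, Γ.IsMatching H ∧ Γ.IsMatching H' ∧
      Disjoint H H' ∧ H.card + H'.card = m} := by
  refine ⟨2 * Fintype.card Γ.E, ?_⟩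
  rintro m ⟨H, H', -, -, -, rfl⟩
  have := Finset.card_le_univ H
  have := Finset.card_le_univ H'
  omega

theorem card_add_card_le_nu2 (hM : Γ.IsMatching M) (hN : Γ.IsMatching N) (hMN : Disjoint M N) :
    M.card + N.card ≤ Γ.nu2 :=
  le_csSup (nu2_bddAbove Γ) ⟨M, N, hM, hN, hMN, rfl⟩

theorem exists_card_add_card_eq_nu2 (Γ : Multigraph) : ∃ H H' : Finset Γ.E,
    Γ.IsMatching H ∧ Γ.IsMatching H' ∧ Disjoint H H' ∧ H.card + H'.card = Γ.nu2 :=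
  Nat.sSup_mem (s := {m | ∃ H H' : Finset Γ.E, Γ.IsMatching H ∧ Γ.IsMatching H' ∧
      Disjoint H H' ∧ H.card + H'.card = m})
    ⟨0, ∅, ∅, isMatching_empty, isMatching_empty, disjoint_bot_left, rfl⟩ (nu2_bddAbove Γ)

end Matching

section Degree

variable {Γ : Multigraph}

theorem card_incident_le_deg (z : Γ.V) :
    (Finset.univ.filter fun d => z ∈ Γ.ends d).card ≤ Γ.deg z := by
  rw [deg, Finset.card_filter]
  refine Finset.sum_le_sum fun d _ => ?_
  split_ifs <;> simp

theorem deg_eq_card_incident (hl : Γ.Loopless) (z : Γ.V) :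
    Γ.deg z = (Finset.univ.filter fun d => z ∈ Γ.ends d).card := by
  rw [deg, Finset.card_filter]
  refine Finset.sum_congr rfl fun d _ => ?_
  have : Γ.ends d ≠ Sym2.diag z := fun h => hl d (by rw [IsLoop, h]; exact Sym2.diag_isDiag z)
  simp [this]

theorem three_le_deg {z : Γ.V} {d₁ d₂ d₃ : Γ.E} (h₁₂ : d₁ ≠ d₂) (h₁₃ : d₁ ≠ d₃) (h₂₃ : d₂ ≠ d₃)
    (h₁ : z ∈ Γ.ends d₁) (h₂ : z ∈ Γ.ends d₂) (h₃ : z ∈ Γ.ends d₃) : 3 ≤ Γ.deg z := by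
  refine le_trans ?_ (card_incident_le_deg z)
  calc 3 = ({d₁, d₂, d₃} : Finset Γ.E).card := by simp [h₁₂, h₁₃, h₂₃]
    _ ≤ _ := Finset.card_le_card (by simp [Finset.insert_subset_iff, h₁, h₂, h₃])

theorem three_le_deg_of_saturated {H H' : Finset Γ.E} (hdisj : Disjoint H H') {z : Γ.V}
    (hH : Γ.Saturated H z) (hH' : Γ.Saturated H' z) {g : Γ.E} (hg : z ∈ Γ.ends g)
    (hgH : g ∉ H) (hgH' : g ∉ H') : 3 ≤ Γ.deg z := by
  obtain ⟨d, hd, hzd⟩ := hH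
  obtain ⟨d', hd', hzd'⟩ := hH'
  refine three_le_deg ?_ ?_ ?_ hzd hzd' hg
  · rintro rfl
    exact Finset.disjoint_left.1 hdisj hd hd'
  · rintro rfl
    exact hgH hd
  · rintro rfl
    exact hgH' hd'

theorem Connected.forall_of_adj (hconn : Γ.Connected) {P : Γ.V → Prop} {a : Γ.V} (ha : P a)
    (h : ∀ x y, Γ.Adj x y → P x → P y) (y : Γ.V) : P y := by
  induction hconn a y with
  | refl => exact ha
  | tail _ hxy ih => exact h _ _ hxy ih

end Degree

section Alternate

variable {Γ : Multigraph} {M N : Finset Γ.E}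

def alternate (M N : Finset Γ.E) (i : ℕ) : Finset Γ.E := if Even i then M else N

theorem alternate_add_two (i : ℕ) : alternate M N (i + 2) = alternate M N i := by
  simp [alternate, Nat.even_add]

theorem alternate_one : alternate M N 1 = N := by simp [alternate]

theorem alternate_eq_or (i : ℕ) : alternate M N i = N ∨ alternate M N (i + 1) = N := by
  by_cases h : Even i <;> simp [alternate, h, Nat.even_add_one]

theorem mem_alternate_or {d : Γ.E} (hd : d ∈ M ∪ N) (i : ℕ) :
    d ∈ alternate M N i ∨ d ∈ alternate M N (i + 1) := by
  by_cases h : Even i <;> simpa [alternate, h, Nat.even_add_one, or_comm] using hd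

theorem IsMatching.alternate (hM : Γ.IsMatching M) (hN : Γ.IsMatching N) (i : ℕ) :
    Γ.IsMatching (alternate M N i) := by
  unfold Multigraph.alternate
  split <;> assumption

end Alternate

/-- Only `vert 0, …, vert len` and `edge 0, …, edge (len - 1)` are meaningful. -/
structure Walk (Γ : Multigraph) where
  len : ℕ
  vert : ℕ → Γ.V
  edge : ℕ → Γ.E
  ends_edge : ∀ i < len, Γ.ends (edge i) = s(vert i, vert (i + 1))

namespace Walk

variable {Γ : Multigraph} (p : Walk Γ)

def IsPath : Prop := ∀ i j, i ≤ p.len → j ≤ p.len → p.vert i = p.vert j → i = j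

def IsCycle : Prop :=
  p.vert p.len = p.vert 0 ∧ ∀ i j, i < p.len → j < p.len → p.vert i = p.vert j → i = j

def edgeFinset : Finset Γ.E := (Finset.range p.len).image p.edge

noncomputable def nil [Nonempty Γ.E] (x : Γ.V) : Walk Γ where
  len := 0
  vert _ := x
  edge _ := Classical.arbitrary Γ.E
  ends_edge _ h := absurd h (Nat.not_lt_zero _)

theorem isPath_nil [Nonempty Γ.E] (x : Γ.V) : (nil x).IsPath := fun i j hi hj _ => by
  simp only [nil] at hi hj
  omega

def cons (x : Γ.V) (f : Γ.E) (hf : Γ.ends f = s(x, p.vert 0)) : Walk Γ where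
  len := p.len + 1
  vert | 0 => x | i + 1 => p.vert i
  edge | 0 => f | i + 1 => p.edge i
  ends_edge
    | 0, _ => hf
    | i + 1, hi => p.ends_edge i (by omega)

@[simp] theorem cons_len {x : Γ.V} {f : Γ.E} {hf : Γ.ends f = s(x, p.vert 0)} :
    (p.cons x f hf).len = p.len + 1 := rfl

def snoc (f : Γ.E) (x : Γ.V) (hf : Γ.ends f = s(p.vert p.len, x)) : Walk Γ where
  len := p.len + 1
  vert i := if i ≤ p.len then p.vert i else x
  edge i := if i < p.len then p.edge i else f
  ends_edge i hi := by
    rcases (Nat.lt_succ_iff.1 hi).lt_or_eq with hi | rfl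
    · simp [hi, hi.le, Nat.succ_le_of_lt hi, p.ends_edge i hi]
    · simp [hf]

variable {p}

theorem mem_edgeFinset {d : Γ.E} : d ∈ p.edgeFinset ↔ ∃ i < p.len, p.edge i = d := by
  simp [edgeFinset]

theorem mem_ends_edge {i : ℕ} (hi : i < p.len) {z : Γ.V} :
    z ∈ Γ.ends (p.edge i) ↔ z = p.vert i ∨ z = p.vert (i + 1) := by
  rw [p.ends_edge i hi, Sym2.mem_iff]

theorem left_mem_ends_edge {i : ℕ} (hi : i < p.len) : p.vert i ∈ Γ.ends (p.edge i) :=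
  (mem_ends_edge hi).2 (Or.inl rfl)

theorem right_mem_ends_edge {i : ℕ} (hi : i < p.len) : p.vert (i + 1) ∈ Γ.ends (p.edge i) :=
  (mem_ends_edge hi).2 (Or.inr rfl)

theorem exists_vert_eq_of_mem_edgeFinset {d : Γ.E} (hd : d ∈ p.edgeFinset) {z : Γ.V}
    (hz : z ∈ Γ.ends d) : ∃ j ≤ p.len, p.vert j = z := by
  obtain ⟨i, hi, rfl⟩ := mem_edgeFinset.1 hd
  rcases (mem_ends_edge hi).1 hz with rfl | rfl
  exacts [⟨i, hi.le, rfl⟩, ⟨i + 1, hi, rfl⟩]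

theorem IsPath.cons (hp : p.IsPath) {x : Γ.V} (hx : ∀ i ≤ p.len, p.vert i ≠ x) {f : Γ.E}
    (hf : Γ.ends f = s(x, p.vert 0)) : (p.cons x f hf).IsPath := by
  rintro (_ | i) (_ | j) hi hj h
  · rfl
  · exact absurd h.symm (hx j (by simpa [Walk.cons] using hj))
  · exact absurd h (hx i (by simpa [Walk.cons] using hi))
  · simp only [Walk.cons, Nat.add_le_add_iff_right] at hi hj h
    rw [hp i j hi hj h]

theorem IsPath.snoc (hp : p.IsPath) {x : Γ.V} (hx : ∀ i ≤ p.len, p.vert i ≠ x) {f : Γ.E}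
    (hf : Γ.ends f = s(p.vert p.len, x)) : (p.snoc f x hf).IsPath := by
  intro i j hi hj h
  simp only [Walk.snoc] at hi hj h
  split_ifs at h with h₁ h₂ h₂
  · exact hp i j h₁ h₂ h
  · exact absurd h (hx i h₁)
  · exact absurd h.symm (hx j h₂)
  · omega

theorem IsPath.len_lt_card (hp : p.IsPath) : p.len < Fintype.card Γ.V := by
  have := Finset.card_le_card_of_injOn p.vert (s := Finset.range (p.len + 1))
    (t := Finset.univ) (fun _ _ => Finset.mem_coe.2 (Finset.mem_univ _))
    (fun i hi j hj h => hp i j (by simp at hi; omega) (by simp at hj; omega) h)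
  simpa using this

theorem IsPath.edge_injOn (hp : p.IsPath) {i j : ℕ} (hi : i < p.len) (hj : j < p.len)
    (h : p.edge i = p.edge j) : i = j := by
  have h' := p.ends_edge i hi
  rw [h, p.ends_edge j hj, Sym2.eq_iff] at h'
  rcases h' with ⟨h₁, -⟩ | ⟨h₁, h₂⟩
  · exact (hp j i hj.le hi.le h₁).symm
  · have := hp j (i + 1) hj.le hi h₁
    have := hp (j + 1) i hj hi.le h₂
    omega

theorem IsPath.card_edgeFinset (hp : p.IsPath) : p.edgeFinset.card = p.len := by
  rw [edgeFinset, Finset.card_image_of_injOn, Finset.card_range]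
  intro i hi j hj h
  exact hp.edge_injOn (by simpa using hi) (by simpa using hj) h

theorem IsPath.isMatching_image (hp : p.IsPath) {I : Finset ℕ} (hI : ∀ i ∈ I, i < p.len)
    (hI₂ : ∀ i ∈ I, i + 1 ∉ I) : Γ.IsMatching (I.image p.edge) := by
  refine ⟨?_, ?_⟩
  · simp only [Finset.mem_image]
    rintro _ ⟨i, hi, rfl⟩ hl
    rw [IsLoop, p.ends_edge i (hI i hi), Sym2.mk_isDiag_iff] at hl
    exact absurd (hp i (i + 1) (hI i hi).le (hI i hi) hl) (by omega)
  · simp only [Finset.mem_image]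
    rintro _ ⟨i, hi, rfl⟩ _ ⟨j, hj, rfl⟩ hij z hzi hzj
    have hi' := hI i hi
    have hj' := hI j hj
    rw [mem_ends_edge hi'] at hzi
    rw [mem_ends_edge hj'] at hzj
    have : i = j ∨ i = j + 1 ∨ j = i + 1 := by
      rcases hzi with rfl | rfl <;> rcases hzj with h | h
      all_goals first
        | have := hp _ _ (by omega) (by omega) h; omega
    rcases this with rfl | rfl | rfl
    · exact hij rfl
    · exact hI₂ j hj hi
    · exact hI₂ i hi hj

theorem IsPath.isMatching_union_image (hp : p.IsPath) {M : Finset Γ.E} (hM : Γ.IsMatching M)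
    {I : Finset ℕ} (hI : ∀ i ∈ I, i < p.len) (hI₂ : ∀ i ∈ I, i + 1 ∉ I)
    (hMI : ∀ i ∈ I, ¬ Γ.Saturated M (p.vert i) ∧ ¬ Γ.Saturated M (p.vert (i + 1))) :
    Γ.IsMatching (M ∪ I.image p.edge) := by
  refine hM.union (hp.isMatching_image hI hI₂) ?_
  rintro z hzM ⟨_, hd, hz⟩
  obtain ⟨i, hi, rfl⟩ := Finset.mem_image.1 hd
  rcases (mem_ends_edge (hI i hi)).1 hz with rfl | rfl
  exacts [(hMI i hi).1 hzM, (hMI i hi).2 hzM]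

theorem disjoint_image_edge {M : Finset Γ.E} {I : Finset ℕ} (hI : ∀ i ∈ I, i < p.len)
    (hM : ∀ i ∈ I, ¬ Γ.Saturated M (p.vert (i + 1))) : Disjoint M (I.image p.edge) := by
  simp only [Finset.disjoint_right, Finset.mem_image]
  rintro _ ⟨i, hi, rfl⟩
  exact not_mem_of_not_saturated (right_mem_ends_edge (hI i hi)) (hM i hi)

/-- The even-indexed edges of the path join `M`, the odd-indexed ones join `N`. -/
theorem IsPath.card_add_card_add_len_le_nu2 (hp : p.IsPath) {M N : Finset Γ.E}
    (hM : Γ.IsMatching M) (hN : Γ.IsMatching N) (hMN : Disjoint M N)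
    (hMp : ∀ i ≤ p.len, ¬ Γ.Saturated M (p.vert i))
    (hNp : ∀ i ≤ p.len, 0 < i → ¬ Γ.Saturated N (p.vert i)) :
    M.card + N.card + p.len ≤ Γ.nu2 := by
  set I₀ := (Finset.range p.len).filter Even
  set I₁ := (Finset.range p.len).filter fun i => ¬ Even i
  have hI₀ : ∀ i ∈ I₀, i < p.len ∧ Even i := by simp [I₀]
  have hI₁ : ∀ i ∈ I₁, i < p.len ∧ ¬ Even i := by simp [I₁]
  have hM' : Γ.IsMatching (M ∪ I₀.image p.edge) :=
    hp.isMatching_union_image hM (fun i hi => (hI₀ i hi).1)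
      (fun i hi h => Nat.even_add_one.1 (hI₀ _ h).2 (hI₀ i hi).2)
      fun i hi => ⟨hMp i (hI₀ i hi).1.le, hMp (i + 1) (hI₀ i hi).1⟩
  have hN' : Γ.IsMatching (N ∪ I₁.image p.edge) :=
    hp.isMatching_union_image hN (fun i hi => (hI₁ i hi).1)
      (fun i hi h => (hI₁ _ h).2 (Nat.even_add_one.2 (hI₁ i hi).2))
      fun i hi => ⟨hNp i (hI₁ i hi).1.le (Nat.pos_of_ne_zero fun h => (hI₁ i hi).2 (h ▸ ⟨0, rfl⟩)),
        hNp (i + 1) (hI₁ i hi).1 (by omega)⟩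
  have hE : Disjoint (I₀.image p.edge) (I₁.image p.edge) := by
    simp only [Finset.disjoint_left, Finset.mem_image]
    rintro _ ⟨i, hi, rfl⟩ ⟨j, hj, hji⟩
    exact (hI₁ j hj).2 (hp.edge_injOn (hI₁ j hj).1 (hI₀ i hi).1 hji ▸ (hI₀ i hi).2)
  have hMI₀ := disjoint_image_edge (fun i hi => (hI₀ i hi).1) fun i hi => hMp _ (hI₀ i hi).1
  have hMI₁ := disjoint_image_edge (fun i hi => (hI₁ i hi).1) fun i hi => hMp _ (hI₁ i hi).1
  have hNI₀ := disjoint_image_edge (fun i hi => (hI₀ i hi).1) fun i hi =>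
    hNp _ (hI₀ i hi).1 (Nat.succ_pos i)
  have hNI₁ := disjoint_image_edge (fun i hi => (hI₁ i hi).1) fun i hi =>
    hNp _ (hI₁ i hi).1 (Nat.succ_pos i)
  have hcard : (I₀.image p.edge).card + (I₁.image p.edge).card = p.len := by
    rw [← Finset.card_union_of_disjoint hE, ← Finset.image_union,
      Finset.filter_union_filter_not_eq, ← edgeFinset, hp.card_edgeFinset]
  have := card_add_card_le_nu2 hM' hN' (Finset.disjoint_union_left.2
    ⟨Finset.disjoint_union_right.2 ⟨hMN, hMI₁⟩, Finset.disjoint_union_right.2 ⟨hNI₀.symm, hE⟩⟩)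
  rw [Finset.card_union_of_disjoint hMI₀, Finset.card_union_of_disjoint hNI₁] at this
  omega

def IsAlternating (p : Walk Γ) (M N : Finset Γ.E) : Prop := ∀ i < p.len, p.edge i ∈ alternate M N i

section Alternating

variable {M N : Finset Γ.E}

theorem IsAlternating.edgeFinset_subset (ha : p.IsAlternating M N) : p.edgeFinset ⊆ M ∪ N := by
  intro d hd
  obtain ⟨i, hi, rfl⟩ := mem_edgeFinset.1 hd
  have := ha i hi
  unfold alternate at this
  split at this
  exacts [Finset.mem_union_left _ this, Finset.mem_union_right _ this]

theorem IsAlternating.saturated_left (ha : p.IsAlternating M N) (hodd : Odd p.len) {j : ℕ}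
    (hj : j ≤ p.len) : Γ.Saturated M (p.vert j) := by
  by_cases hje : Even j
  · have hj' : j < p.len := hj.lt_of_ne fun h => Nat.not_even_iff_odd.2 hodd (h ▸ hje)
    exact ⟨_, by simpa [alternate, hje] using ha j hj', left_mem_ends_edge hj'⟩
  · obtain ⟨i, rfl⟩ : ∃ i, j = i + 1 := ⟨j - 1, by grind⟩
    have hi : Even i := by simpa [Nat.even_add_one] using hje
    exact ⟨_, by simpa [alternate, hi] using ha i (by omega), right_mem_ends_edge (by omega)⟩

theorem IsAlternating.saturated_right (ha : p.IsAlternating M N) {j : ℕ} (hj₀ : 0 < j)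
    (hj : j < p.len) : Γ.Saturated N (p.vert j) := by
  by_cases hje : Even j
  · obtain ⟨i, rfl⟩ : ∃ i, j = i + 1 := ⟨j - 1, by omega⟩
    have hi : ¬ Even i := by simpa [Nat.even_add_one] using hje
    exact ⟨_, by simpa [alternate, hi] using ha i (by omega), right_mem_ends_edge (by omega)⟩
  · exact ⟨_, by simpa [alternate, hje] using ha j hj, left_mem_ends_edge hj⟩

theorem IsAlternating.mem_edgeFinset_or (ha : p.IsAlternating M N) (hM : Γ.IsMatching M)
    (hN : Γ.IsMatching N) (h₀ : ¬ Γ.Saturated N (p.vert 0)) {j : ℕ} (hj : j ≤ p.len) {d : Γ.E}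
    (hd : d ∈ M ∪ N) (hjd : p.vert j ∈ Γ.ends d) :
    d ∈ p.edgeFinset ∨ (j = p.len ∧ d ∈ alternate M N p.len) := by
  rcases mem_alternate_or hd j with hdj | hdj
  · rcases hj.lt_or_eq with hj | rfl
    · exact Or.inl (mem_edgeFinset.2 ⟨j, hj, ((hM.alternate hN j).eq_of_mem_ends (ha j hj) hdj
        (left_mem_ends_edge hj) hjd)⟩)
    · exact Or.inr ⟨rfl, hdj⟩
  · obtain _ | i := j
    · exact absurd ⟨d, by rwa [zero_add, alternate_one] at hdj, hjd⟩ h₀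
    · rw [alternate_add_two] at hdj
      exact Or.inl (mem_edgeFinset.2 ⟨i, by omega, ((hM.alternate hN i).eq_of_mem_ends
        (ha i (by omega)) hdj (right_mem_ends_edge (by omega)) hjd)⟩)

theorem IsAlternating.exists_snoc (hp : p.IsPath) (ha : p.IsAlternating M N)
    (hM : Γ.IsMatching M) (hN : Γ.IsMatching N) (h₀ : ¬ Γ.Saturated N (p.vert 0)) {j : ℕ}
    (hj : j ≤ p.len) {d : Γ.E} (hd : d ∈ M ∪ N) (hjd : p.vert j ∈ Γ.ends d)
    (hdp : d ∉ p.edgeFinset) :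
    ∃ q : Walk Γ, q.IsPath ∧ q.vert 0 = p.vert 0 ∧ q.IsAlternating M N ∧ q.len = p.len + 1 := by
  obtain ⟨rfl, hdl⟩ := (ha.mem_edgeFinset_or hM hN h₀ hj hd hjd).resolve_left hdp
  obtain ⟨x, hx⟩ := Sym2.mem_iff_exists.1 hjd
  have hxp : ∀ i ≤ p.len, p.vert i ≠ x := by
    rintro i hi rfl
    rcases ha.mem_edgeFinset_or hM hN h₀ hi hd (hx ▸ Sym2.mem_mk_right _ _) with h | ⟨rfl, -⟩
    · exact hdp h
    · exact (hM.alternate hN _).1 d hdl (by rw [IsLoop, hx]; exact Sym2.mk_isDiag_iff.2 rfl)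
  refine ⟨p.snoc d x hx, hp.snoc hxp hx, by simp [snoc], fun i hi => ?_, rfl⟩
  simp only [snoc] at hi ⊢
  split_ifs with h
  · exact ha i h
  · rwa [show i = p.len by omega]

theorem exists_isPath_isAlternating [Nonempty Γ.E] (hM : Γ.IsMatching M) (hN : Γ.IsMatching N)
    {x : Γ.V} (hx : ¬ Γ.Saturated N x) :
    ∃ p : Walk Γ, p.IsPath ∧ p.vert 0 = x ∧ p.IsAlternating M N ∧
      ∀ j ≤ p.len, ∀ d ∈ M ∪ N, p.vert j ∈ Γ.ends d → d ∈ p.edgeFinset := by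
  by_contra! h
  have hlong : ∀ n, ∃ p : Walk Γ, p.IsPath ∧ p.vert 0 = x ∧ p.IsAlternating M N ∧ p.len = n := by
    intro n
    induction n with
    | zero => exact ⟨nil x, isPath_nil x, rfl, fun i hi => absurd hi (Nat.not_lt_zero i), rfl⟩
    | succ n ih =>
      obtain ⟨p, hp, hp₀, ha, rfl⟩ := ih
      obtain ⟨j, hj, d, hd, hjd, hdp⟩ := h p hp hp₀ ha
      obtain ⟨q, hq, hq₀, hqa, hql⟩ := ha.exists_snoc hp hM hN (hp₀ ▸ hx) hj hd hjd hdp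
      exact ⟨q, hq, hq₀.trans hp₀, hqa, hql⟩
  obtain ⟨p, hp, -, -, hlen⟩ := hlong (Fintype.card Γ.V)
  exact absurd hp.len_lt_card (by omega)

theorem IsAlternating.eq_len_of_not_saturated (ha : p.IsAlternating M N) {j : ℕ} (hj₀ : 0 < j)
    (hj : j ≤ p.len) (hN : ¬ Γ.Saturated N (p.vert j)) : j = p.len ∧ Odd p.len := by
  obtain ⟨i, rfl⟩ : ∃ i, j = i + 1 := ⟨j - 1, by omega⟩
  have hi := ha i (by omega)
  have hN' : alternate M N i ≠ N := fun h => hN ⟨_, h ▸ hi, right_mem_ends_edge (by omega)⟩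
  have hlen : i + 1 = p.len := by
    by_contra hlt
    have hN'' := (alternate_eq_or (M := M) i).resolve_left hN'
    exact hN ⟨_, hN'' ▸ ha (i + 1) (by omega), left_mem_ends_edge (by omega)⟩
  have heven : Even i := by
    by_contra h
    exact hN' (by simp [alternate, h])
  exact ⟨hlen, hlen ▸ heven.add_one⟩

end Alternating

theorem IsCycle.exists_isPath (hc : p.IsCycle) (hpos : 0 < p.len) {j : ℕ} (hj : j ≤ p.len) :
    ∃ q : Walk Γ, q.IsPath ∧ q.len + 1 = p.len ∧ q.vert 0 = p.vert j ∧
      ∀ t, ∃ s < p.len, q.vert t = p.vert s := by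
  have hmod : ∀ i ≤ p.len, p.vert (i % p.len) = p.vert i := by
    intro i hi
    rcases hi.lt_or_eq with hi | rfl
    · rw [Nat.mod_eq_of_lt hi]
    · rw [Nat.mod_self, hc.1]
  refine ⟨⟨p.len - 1, fun t => p.vert ((j + t) % p.len), fun t => p.edge ((j + t) % p.len),
    fun t _ => ?_⟩, fun a b ha hb h => ?_, by simp; omega, by simpa using hmod j hj,
    fun t => ⟨_, Nat.mod_lt _ hpos, rfl⟩⟩
  · have hr := Nat.mod_lt (j + t) hpos
    have hsucc : ((j + t) % p.len + 1) % p.len = (j + (t + 1)) % p.len :=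
      (Nat.mod_modEq _ _).add_right 1
    rw [p.ends_edge _ hr, ← hsucc, hmod _ hr]
  · simp only at ha hb
    have := hc.2 _ _ (Nat.mod_lt _ hpos) (Nat.mod_lt _ hpos) h
    have := Nat.ModEq.add_left_cancel' j this
    rwa [Nat.ModEq, Nat.mod_eq_of_lt (by omega), Nat.mod_eq_of_lt (by omega)] at this

end Walk

section Branching

variable {G : Multigraph} {H H' C : Finset G.E}

/-- If every vertex of `Z` had degree `2`, the alternating even cycle `C` through `Z` would be a
connected component of `G`, hence all of `G`. -/
theorem exists_three_le_deg (hconn : G.Connected) (hδ : ∀ z, 2 ≤ G.deg z)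
    (hnotEvenCycle : ¬ ((∀ z, G.deg z = 2) ∧ Even (Fintype.card G.E)))
    (hdisj : Disjoint H H') (hC : Even C.card) {Z : Set G.V} {z₀ : G.V} (hz₀ : z₀ ∈ Z)
    (hCZ : ∀ f ∈ C, ∀ z ∈ G.ends f, z ∈ Z)
    (hZsat : ∀ z ∈ Z, G.Saturated H z ∧ G.Saturated H' z)
    (hclosed : ∀ z ∈ Z, ∀ f ∈ H ∪ H', z ∈ G.ends f → f ∈ C) :
    ∃ b ∈ Z, 3 ≤ G.deg b := by
  by_contra! hlt
  have hC_of : ∀ z ∈ Z, ∀ f, z ∈ G.ends f → f ∈ C := fun z hz f hzf => by_contra fun hf =>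
    (three_le_deg_of_saturated hdisj (hZsat z hz).1 (hZsat z hz).2 hzf
      (fun h => hf (hclosed z hz f (Finset.mem_union_left _ h) hzf))
      (fun h => hf (hclosed z hz f (Finset.mem_union_right _ h) hzf))).not_gt (hlt z hz)
  have hZ : ∀ z, z ∈ Z := by
    refine hconn.forall_of_adj hz₀ ?_
    rintro x y ⟨f, hf⟩ hx
    exact hCZ f (hC_of x hx f (hf ▸ Sym2.mem_mk_left x y)) y (hf ▸ Sym2.mem_mk_right x y)
  have hCuniv : C = Finset.univ :=
    Finset.eq_univ_of_forall fun f => hC_of _ (hZ _) f (Sym2.out_fst_mem _)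
  refine hnotEvenCycle ⟨fun z => ?_, by rwa [← Finset.card_univ, ← hCuniv]⟩
  have := hδ z
  have := hlt z (hZ z)
  omega

theorem exists_edge_to_unsaturated (hloopless : G.Loopless)
    (hedge : ∀ f : G.E, ∀ a b : G.V, G.ends f = s(a, b) → ¬ (3 ≤ G.deg a ∧ 3 ≤ G.deg b))
    (hH : G.IsMatching H) (hH' : G.IsMatching H') (hdisj : Disjoint H H') {b : G.V}
    (hbH : G.Saturated H b) (hbH' : G.Saturated H' b) (hb : 3 ≤ G.deg b) :
    ∃ g y, G.ends g = s(b, y) ∧ g ∉ H ∪ H' ∧ ¬ (G.Saturated H y ∧ G.Saturated H' y) := by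
  obtain ⟨h₁, hh₁, hb₁⟩ := hbH
  obtain ⟨h₂, hh₂, hb₂⟩ := hbH'
  obtain ⟨g, hbg, hg₁, hg₂⟩ : ∃ g, b ∈ G.ends g ∧ g ≠ h₁ ∧ g ≠ h₂ := by
    by_contra! h
    have hsub : (Finset.univ.filter fun d => b ∈ G.ends d) ⊆ {h₁, h₂} := fun d hd => by
      by_cases hd₁ : d = h₁
      · simp [hd₁]
      · simp [h d (Finset.mem_filter.1 hd).2 hd₁]
    have := (Finset.card_le_card hsub).trans Finset.card_le_two
    rw [← deg_eq_card_incident hloopless] at this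
    omega
  have hgH : g ∉ H := fun h => hg₁ (hH.eq_of_mem_ends h hh₁ hbg hb₁)
  have hgH' : g ∉ H' := fun h => hg₂ (hH'.eq_of_mem_ends h hh₂ hbg hb₂)
  obtain ⟨y, hy⟩ := Sym2.mem_iff_exists.1 hbg
  refine ⟨g, y, hy, by simp [hgH, hgH'], fun ⟨hyH, hyH'⟩ => hedge g b y hy ⟨hb, ?_⟩⟩
  exact three_le_deg_of_saturated hdisj hyH hyH' (hy ▸ Sym2.mem_mk_right b y) hgH hgH'

end Branching

-- So that `(G.subdivideOnce e u v).V` and `.E` unfold to the sum types when rewriting.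
attribute [reducible] subdivideOnce

section Subdivision

variable {G : Multigraph} {e : G.E} {u v : G.V} {X Y : Finset G.E}

instance : Nonempty (G.subdivideOnce e u v).E := ⟨Sum.inr true⟩

def liftEdges (e : G.E) (u v : G.V) (X : Finset G.E) : Finset (G.subdivideOnce e u v).E :=
  (X.subtype (· ≠ e)).map (Function.Embedding.inl : _ ↪ (G.subdivideOnce e u v).E)

theorem mem_ends_subdivideOnce_inl {f : {f : G.E // f ≠ e}} {x : (G.subdivideOnce e u v).V} :
    x ∈ (G.subdivideOnce e u v).ends (Sum.inl f) ↔ ∃ a ∈ G.ends f, Sum.inl a = x :=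
  Sym2.mem_map

theorem isLoop_subdivideOnce_inl {f : {f : G.E // f ≠ e}} :
    (G.subdivideOnce e u v).IsLoop (Sum.inl f) ↔ G.IsLoop f :=
  Sym2.isDiag_map Sum.inl_injective

theorem inl_mem_liftEdges {f : {f : G.E // f ≠ e}} :
    (Sum.inl f : (G.subdivideOnce e u v).E) ∈ liftEdges e u v X ↔ f.1 ∈ X := by
  simp [liftEdges]

theorem inr_not_mem_liftEdges (b : Bool) :
    (Sum.inr b : (G.subdivideOnce e u v).E) ∉ liftEdges e u v X := by
  simp [liftEdges]

theorem card_liftEdges (he : e ∉ X) : (liftEdges e u v X).card = X.card := by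
  rw [liftEdges, Finset.card_map, Finset.card_subtype, Finset.filter_true_of_mem]
  rintro f hf rfl
  exact he hf

theorem disjoint_liftEdges (h : Disjoint X Y) :
    Disjoint (liftEdges e u v X) (liftEdges e u v Y) := by
  rw [Finset.disjoint_left]
  rintro (f | b) hX hY
  · exact Finset.disjoint_left.1 h (inl_mem_liftEdges.1 hX) (inl_mem_liftEdges.1 hY)
  · exact inr_not_mem_liftEdges b hX

theorem not_saturated_liftEdges_inl {z : G.V} (h : ¬ G.Saturated X z) :
    ¬ (G.subdivideOnce e u v).Saturated (liftEdges e u v X) (Sum.inl z) := by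
  rintro ⟨f | b, hf, hz⟩
  · rw [mem_ends_subdivideOnce_inl] at hz
    obtain ⟨a, ha, haz⟩ := hz
    cases Sum.inl_injective haz
    exact h ⟨f, inl_mem_liftEdges.1 hf, ha⟩
  · exact inr_not_mem_liftEdges b hf

theorem not_saturated_liftEdges_inr :
    ¬ (G.subdivideOnce e u v).Saturated (liftEdges e u v X) (Sum.inr ()) := by
  rintro ⟨f | b, hf, hz⟩
  · rw [mem_ends_subdivideOnce_inl] at hz
    obtain ⟨a, -, ha⟩ := hz
    exact Sum.inl_ne_inr ha
  · exact inr_not_mem_liftEdges b hf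

theorem isMatching_liftEdges (hX : G.IsMatching X) :
    (G.subdivideOnce e u v).IsMatching (liftEdges e u v X) := by
  refine ⟨?_, ?_⟩
  · rintro (f | b) hf hl
    · rw [isLoop_subdivideOnce_inl] at hl
      exact hX.1 f (inl_mem_liftEdges.1 hf) hl
    · exact inr_not_mem_liftEdges b hf
  · rintro (f | b) hf (f' | b') hf' hff' z hz hz'
    · rw [mem_ends_subdivideOnce_inl] at hz hz'
      obtain ⟨a, ha, rfl⟩ := hz
      obtain ⟨a', ha', h⟩ := hz'
      cases Sum.inl_injective h
      exact hX.2 f (inl_mem_liftEdges.1 hf) f' (inl_mem_liftEdges.1 hf')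
        (fun h => hff' (congrArg Sum.inl (Subtype.ext h))) a ha ha'
    · exact inr_not_mem_liftEdges b' hf'
    · exact inr_not_mem_liftEdges b hf
    · exact inr_not_mem_liftEdges b hf

/-- Drop the edges of `C` from `H` and `H'`, then colour the path alternately, starting at `z₀`
with the matching that misses `z₀`. -/
theorem card_add_card_add_one_le_nu2_subdivideOnce {H H' C : Finset G.E} (hH : G.IsMatching H)
    (hH' : G.IsMatching H') (hdisj : Disjoint H H') (hCH : C ⊆ H ∪ H') (heC : e ∉ (H ∪ H') \ C)
    {p : Walk (G.subdivideOnce e u v)} (hp : p.IsPath) (hlen : p.len = C.card + 1) {z₀ : G.V}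
    (hz₀ : p.vert 0 = Sum.inl z₀) (h₀ : ¬ G.Saturated (H \ C) z₀ ∨ ¬ G.Saturated (H' \ C) z₀)
    (hrest : ∀ i ≤ p.len, 0 < i → ∀ z, p.vert i = Sum.inl z → ¬ G.Saturated ((H ∪ H') \ C) z) :
    H.card + H'.card + 1 ≤ (G.subdivideOnce e u v).nu2 := by
  wlog h₀' : ¬ G.Saturated (H \ C) z₀ generalizing H H'
  · have := this hH' hH hdisj.symm (by rwa [Finset.union_comm]) (by rwa [Finset.union_comm])
      h₀.symm (by simpa only [Finset.union_comm] using hrest) (h₀.resolve_left h₀')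
    omega
  have hsat : ∀ Y ⊆ (H ∪ H') \ C, ∀ i ≤ p.len, 0 < i →
      ¬ (G.subdivideOnce e u v).Saturated (liftEdges e u v Y) (p.vert i) := by
    intro Y hY i hi hi₀
    cases hpi : p.vert i with
    | inl z => exact not_saturated_liftEdges_inl fun h => hrest i hi hi₀ z hpi (h.mono hY)
    | inr _ => exact not_saturated_liftEdges_inr
  have hHC : H \ C ⊆ (H ∪ H') \ C := Finset.sdiff_subset_sdiff Finset.subset_union_left le_rfl
  have hH'C : H' \ C ⊆ (H ∪ H') \ C := Finset.sdiff_subset_sdiff Finset.subset_union_right le_rfl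
  have key := hp.card_add_card_add_len_le_nu2 (isMatching_liftEdges (hH.mono Finset.sdiff_subset))
    (isMatching_liftEdges (hH'.mono Finset.sdiff_subset))
    (disjoint_liftEdges (hdisj.mono Finset.sdiff_subset Finset.sdiff_subset))
    (fun i hi => (Nat.eq_zero_or_pos i).elim (fun h => h ▸ hz₀ ▸ not_saturated_liftEdges_inl h₀')
      (hsat _ hHC i hi)) (hsat _ hH'C)
  rw [card_liftEdges fun h => heC (hHC h), card_liftEdges fun h => heC (hH'C h), hlen] at key
  have hC : (H ∩ C).card + (H' ∩ C).card = C.card := by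
    rw [← Finset.card_union_of_disjoint (hdisj.mono Finset.inter_subset_left
      Finset.inter_subset_left), ← Finset.union_inter_distrib_right, Finset.inter_eq_right.2 hCH]
  have := Finset.card_sdiff_add_card_inter H C
  have := Finset.card_sdiff_add_card_inter H' C
  omega

end Subdivision

namespace Walk

variable {G : Multigraph} {e : G.E} {u v : G.V}

def throughNewVertex (p : Walk G) (u : G.V) (hpe : ∀ i < p.len, p.edge i ≠ e)
    (hv : p.vert 0 = v) : Walk (G.subdivideOnce e u v) where
  len := p.len + 2
  vert
    | 0 => Sum.inl u
    | 1 => Sum.inr ()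
    | i + 2 => Sum.inl (p.vert i)
  edge
    | 0 => Sum.inr true
    | 1 => Sum.inr false
    | i + 2 => if h : p.edge i = e then Sum.inr true else Sum.inl ⟨p.edge i, h⟩
  ends_edge
    | 0, _ => rfl
    | 1, _ => by
      show s(Sum.inl v, Sum.inr ()) = s(Sum.inr (), Sum.inl (p.vert 0))
      rw [hv, Sym2.eq_swap]
    | i + 2, hi => by
      show (G.subdivideOnce e u v).ends
        (if h : p.edge i = e then Sum.inr true else Sum.inl ⟨p.edge i, h⟩) =
          s(Sum.inl (p.vert i), Sum.inl (p.vert (i + 1)))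
      rw [dif_neg (hpe i (by omega))]
      exact congrArg (Sym2.map Sum.inl) (p.ends_edge i (by omega))

variable {p : Walk G} {hpe : ∀ i < p.len, p.edge i ≠ e} {hv : p.vert 0 = v}

@[simp] theorem throughNewVertex_len : (p.throughNewVertex u hpe hv).len = p.len + 2 := rfl

@[simp] theorem throughNewVertex_vert_zero : (p.throughNewVertex u hpe hv).vert 0 = Sum.inl u :=
  rfl

@[simp] theorem throughNewVertex_vert_one : (p.throughNewVertex u hpe hv).vert 1 = Sum.inr () :=
  rfl

@[simp] theorem throughNewVertex_vert_add_two (i : ℕ) :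
    (p.throughNewVertex u hpe hv).vert (i + 2) = Sum.inl (p.vert i) :=
  rfl

theorem exists_eq_of_throughNewVertex_vert {i : ℕ} (hi₀ : 0 < i)
    (hi : i ≤ (p.throughNewVertex u hpe hv).len) {z : G.V}
    (hz : (p.throughNewVertex u hpe hv).vert i = Sum.inl z) : ∃ j ≤ p.len, p.vert j = z := by
  obtain _ | _ | j := i
  · omega
  · exact absurd hz Sum.inr_ne_inl
  · exact ⟨j, by simp at hi; omega, Sum.inl_injective hz⟩

theorem IsPath.throughNewVertex (h : p.IsPath) (hu : ∀ j ≤ p.len, p.vert j ≠ u) :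
    (p.throughNewVertex u hpe hv).IsPath := by
  rintro (_ | _ | i) (_ | _ | j) hi hj hij <;> simp at hi hj hij ⊢
  · exact hu j (by omega) hij.symm
  · exact hu i (by omega) hij
  · exact h i j (by omega) (by omega) hij

theorem IsPath.isCycle_throughNewVertex (h : p.IsPath) (hu : p.vert p.len = u) :
    (p.throughNewVertex u hpe hv).IsCycle := by
  refine ⟨by simp [hu], ?_⟩
  rintro (_ | _ | i) (_ | _ | j) hi hj hij <;> simp at hi hj hij ⊢
  · exact absurd (h j p.len hj.le le_rfl (hij.symm.trans hu.symm)) hj.ne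
  · exact absurd (h i p.len hi.le le_rfl (hij.trans hu.symm)) hi.ne
  · exact h i j hi.le hj.le hij

end Walk

section Subdivision

variable {G : Multigraph} {e : G.E} {u v : G.V} {H H' C : Finset G.E}

theorem card_add_card_add_one_le_nu2_of_not_mem
    (hedge : ∀ f : G.E, ∀ a b : G.V, G.ends f = s(a, b) → ¬ (3 ≤ G.deg a ∧ 3 ≤ G.deg b))
    (hH : G.IsMatching H) (hH' : G.IsMatching H') (hdisj : Disjoint H H') (heH : e ∉ H)
    (heH' : e ∉ H') (he : G.ends e = s(u, v)) :
    H.card + H'.card + 1 ≤ (G.subdivideOnce e u v).nu2 := by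
  obtain ⟨d, ε, hε, hde, hd⟩ : ∃ d ε, (G.subdivideOnce e u v).ends ε = s(Sum.inl d, Sum.inr ()) ∧
      d ∈ G.ends e ∧ G.deg d < 3 := by
    by_cases hu : G.deg u < 3
    · exact ⟨u, Sum.inr true, rfl, he ▸ Sym2.mem_mk_left u v, hu⟩
    · exact ⟨v, Sum.inr false, rfl, he ▸ Sym2.mem_mk_right u v,
        by have := hedge e u v he; omega⟩
  have hfree : ¬ G.Saturated H d ∨ ¬ G.Saturated H' d := by
    rw [← not_and_or]
    exact fun ⟨h, h'⟩ => (three_le_deg_of_saturated hdisj h h' hde heH heH').not_gt hd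
  have hp := (Walk.isPath_nil (Γ := G.subdivideOnce e u v) (Sum.inr ())).cons (x := Sum.inl d)
    (fun _ _ => Sum.inr_ne_inl) hε
  refine card_add_card_add_one_le_nu2_subdivideOnce (C := ∅) hH hH' hdisj
    (Finset.empty_subset _) (by simp [heH, heH']) hp rfl rfl (by simpa using hfree) ?_
  rintro (_ | _ | i) hi hi₀ z hz
  · omega
  · exact absurd hz Sum.inr_ne_inl
  · simp [Walk.nil] at hi

theorem card_add_card_add_one_le_nu2_of_path
    (hH : G.IsMatching H) (hH' : G.IsMatching H') (hdisj : Disjoint H H') (heH : e ∈ H)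
    (he : G.ends e = s(u, v)) {p : Walk G} (hp : p.IsPath) (hpe : ∀ i < p.len, p.edge i ≠ e)
    (hp₀ : p.vert 0 = v) (hCH : C ⊆ H ∪ H') (heC : e ∈ C) (hCcard : C.card = p.len + 1)
    (hclosed : ∀ j ≤ p.len, ∀ f ∈ H ∪ H', p.vert j ∈ G.ends f → f ∈ C)
    (hu : ∀ j ≤ p.len, p.vert j ≠ u) :
    H.card + H'.card + 1 ≤ (G.subdivideOnce e u v).nu2 := by
  have hW := hp.throughNewVertex (u := u) (hpe := hpe) (hv := hp₀) hu
  refine card_add_card_add_one_le_nu2_subdivideOnce hH hH' hdisj hCH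
    (fun h => (Finset.mem_sdiff.1 h).2 heC) hW (by simp [hCcard]) rfl
    (Or.inl (not_saturated_sdiff fun f hf hu => ?_)) fun i hi hi₀ z hz => ?_
  · rwa [hH.eq_of_mem_ends hf heH hu (he ▸ Sym2.mem_mk_left u v)]
  · obtain ⟨j, hj, rfl⟩ := Walk.exists_eq_of_throughNewVertex_vert hi₀ hi hz
    exact not_saturated_sdiff (hclosed j hj)

theorem exists_edge_off_path_of_isAlternating (hloopless : G.Loopless) (hconn : G.Connected)
    (hδ : ∀ z : G.V, 2 ≤ G.deg z)
    (hnotEvenCycle : ¬ ((∀ z : G.V, G.deg z = 2) ∧ Even (Fintype.card G.E)))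
    (hedge : ∀ f : G.E, ∀ a b : G.V, G.ends f = s(a, b) → ¬ (3 ≤ G.deg a ∧ 3 ≤ G.deg b))
    (hH : G.IsMatching H) (hH' : G.IsMatching H') (hdisj : Disjoint H H') (heH : e ∈ H)
    (he : G.ends e = s(u, v)) {p : Walk G} (hp₀ : p.vert 0 = v) (hu : p.vert p.len = u)
    (ha : p.IsAlternating H' (H.erase e)) (hodd : Odd p.len)
    (hCcard : (insert e p.edgeFinset).card = p.len + 1)
    (hclosed : ∀ j ≤ p.len, ∀ f ∈ H ∪ H', p.vert j ∈ G.ends f → f ∈ insert e p.edgeFinset) :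
    ∃ j₀ ≤ p.len, ∃ g y, G.ends g = s(p.vert j₀, y) ∧ g ∉ H ∪ H' ∧
      (∀ j ≤ p.len, p.vert j ≠ y) ∧ ¬ (G.Saturated H y ∧ G.Saturated H' y) := by
  set Z : Set G.V := {z | ∃ j ≤ p.len, p.vert j = z}
  have hZsat : ∀ z ∈ Z, G.Saturated H z ∧ G.Saturated H' z := by
    rintro _ ⟨j, hj, rfl⟩
    refine ⟨?_, ha.saturated_left hodd hj⟩
    rcases Nat.eq_zero_or_pos j with rfl | hj₀
    · exact ⟨e, heH, hp₀ ▸ he ▸ Sym2.mem_mk_right u v⟩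
    rcases hj.lt_or_eq with hj | rfl
    · exact (ha.saturated_right hj₀ hj).mono (Finset.erase_subset e H)
    · exact ⟨e, heH, hu ▸ he ▸ Sym2.mem_mk_left u v⟩
  have hCZ : ∀ f ∈ insert e p.edgeFinset, ∀ z ∈ G.ends f, z ∈ Z := by
    intro f hf z hz
    rcases Finset.mem_insert.1 hf with rfl | hf
    · rcases Sym2.mem_iff.1 (he ▸ hz) with rfl | rfl
      exacts [⟨_, le_rfl, hu⟩, ⟨0, Nat.zero_le _, hp₀⟩]
    · exact p.exists_vert_eq_of_mem_edgeFinset hf hz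
  obtain ⟨_, ⟨j₀, hj₀, rfl⟩, hb⟩ := exists_three_le_deg hconn hδ hnotEvenCycle hdisj
    (hCcard ▸ hodd.add_one) (Z := Z) (z₀ := p.vert 0) ⟨0, Nat.zero_le _, rfl⟩ hCZ hZsat (by
      rintro _ ⟨j, hj, rfl⟩
      exact hclosed j hj)
  obtain ⟨g, y, hg, hgH, hy⟩ := exists_edge_to_unsaturated hloopless hedge hH hH' hdisj
    (hZsat _ ⟨j₀, hj₀, rfl⟩).1 (hZsat _ ⟨j₀, hj₀, rfl⟩).2 hb
  exact ⟨j₀, hj₀, g, y, hg, hgH, fun j hj h => hy (hZsat _ ⟨j, hj, h⟩), hy⟩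

/-- The cycle `u, w, v, …, u` of the subdivision, opened at `p.vert j₀` and extended by the edge
`g` to `y`, is a path with one more edge than `C`. -/
theorem card_add_card_add_one_le_nu2_of_cycle (hH : G.IsMatching H) (hH' : G.IsMatching H')
    (hdisj : Disjoint H H') (heH : e ∈ H) {p : Walk G} (hp : p.IsPath)
    (hpe : ∀ i < p.len, p.edge i ≠ e) (hp₀ : p.vert 0 = v) (hu : p.vert p.len = u)
    (hCH : C ⊆ H ∪ H') (heC : e ∈ C) (hCcard : C.card = p.len + 1)
    (hclosed : ∀ j ≤ p.len, ∀ f ∈ H ∪ H', p.vert j ∈ G.ends f → f ∈ C) {j₀ : ℕ}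
    (hj₀ : j₀ ≤ p.len) {g : G.E} {y : G.V} (hg : G.ends g = s(p.vert j₀, y)) (hgH : g ∉ H ∪ H')
    (hy : ∀ j ≤ p.len, p.vert j ≠ y) (hfree : ¬ (G.Saturated H y ∧ G.Saturated H' y)) :
    H.card + H'.card + 1 ≤ (G.subdivideOnce e u v).nu2 := by
  set W := p.throughNewVertex u hpe hp₀
  have hWp : ∀ s < W.len, ∀ z, W.vert s = Sum.inl z → ∃ j ≤ p.len, p.vert j = z := by
    rintro (_ | s) hs z hz
    · exact ⟨p.len, le_rfl, hu.trans (Sum.inl_injective hz)⟩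
    · exact Walk.exists_eq_of_throughNewVertex_vert (Nat.succ_pos s) hs.le hz
  obtain ⟨q, hq, hqlen, hq₀, hqW⟩ :=
    (hp.isCycle_throughNewVertex (hpe := hpe) (hv := hp₀) hu).exists_isPath (by simp)
      (j := j₀ + 2) (by simp [hj₀])
  have hge : g ≠ e := fun h => hgH (h ▸ Finset.mem_union_left _ heH)
  have hyq : ∀ t ≤ q.len, q.vert t ≠ Sum.inl y := by
    intro t _ h
    obtain ⟨s, hs, hqs⟩ := hqW t
    obtain ⟨j, hj, hjy⟩ := hWp s hs y (hqs ▸ h)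
    exact hy j hj hjy
  have hgq : (G.subdivideOnce e u v).ends (Sum.inl ⟨g, hge⟩) = s(Sum.inl y, q.vert 0) := by
    rw [hq₀, Walk.throughNewVertex_vert_add_two, Sym2.eq_swap]
    exact congrArg (Sym2.map Sum.inl) hg
  refine card_add_card_add_one_le_nu2_subdivideOnce hH hH' hdisj hCH
    (fun h => (Finset.mem_sdiff.1 h).2 heC) (hq.cons hyq hgq) (by simp at hqlen ⊢; omega) rfl
    ((not_and_or.1 hfree).imp (fun h h' => h (h'.mono Finset.sdiff_subset))
      fun h h' => h (h'.mono Finset.sdiff_subset)) ?_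
  rintro (_ | t) - hi₀ z hz
  · omega
  · obtain ⟨s, hs, hqs⟩ := hqW t
    obtain ⟨j, hj, rfl⟩ := hWp s hs z (hqs ▸ hz)
    exact not_saturated_sdiff (hclosed j hj)

end Subdivision

theorem card_add_card_add_one_le_nu2_of_mem {G : Multigraph} {H H' : Finset G.E}
    (hloopless : G.Loopless) (hconn : G.Connected) (hδ : ∀ z : G.V, 2 ≤ G.deg z)
    (hnotEvenCycle : ¬ ((∀ z : G.V, G.deg z = 2) ∧ Even (Fintype.card G.E)))
    (hedge : ∀ f : G.E, ∀ a b : G.V, G.ends f = s(a, b) → ¬ (3 ≤ G.deg a ∧ 3 ≤ G.deg b))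
    (hH : G.IsMatching H) (hH' : G.IsMatching H') (hdisj : Disjoint H H') {e : G.E} {u v : G.V}
    (heH : e ∈ H) (he : G.ends e = s(u, v)) :
    H.card + H'.card + 1 ≤ (G.subdivideOnce e u v).nu2 := by
  have : Nonempty G.E := ⟨e⟩
  have hfree : ∀ z ∈ G.ends e, ¬ G.Saturated (H.erase e) z := fun z hz =>
    hH.not_saturated_erase heH hz
  obtain ⟨p, hp, hp₀, ha, hclosed⟩ := Walk.exists_isPath_isAlternating hH'
    (hH.mono (Finset.erase_subset e H)) (hfree v (he ▸ Sym2.mem_mk_right u v))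
  have heW : e ∉ p.edgeFinset := fun h => by
    rcases Finset.mem_union.1 (ha.edgeFinset_subset h) with h | h
    exacts [Finset.disjoint_left.1 hdisj heH h, Finset.notMem_erase e H h]
  have hpe : ∀ i < p.len, p.edge i ≠ e := fun i hi h => heW (Walk.mem_edgeFinset.2 ⟨i, hi, h⟩)
  have hCH : insert e p.edgeFinset ⊆ H ∪ H' := by
    refine Finset.insert_subset (Finset.mem_union_left _ heH) (ha.edgeFinset_subset.trans ?_)
    exact Finset.union_subset Finset.subset_union_right
      ((Finset.erase_subset e H).trans Finset.subset_union_left)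
  have hCcard : (insert e p.edgeFinset).card = p.len + 1 := by
    rw [Finset.card_insert_of_notMem heW, hp.card_edgeFinset]
  have hCclosed : ∀ j ≤ p.len, ∀ f ∈ H ∪ H', p.vert j ∈ G.ends f → f ∈ insert e p.edgeFinset := by
    intro j hj f hf hjf
    rcases eq_or_ne f e with rfl | hfe
    · exact Finset.mem_insert_self f _
    · refine Finset.mem_insert_of_mem (hclosed j hj f ?_ hjf)
      simp only [Finset.mem_union, Finset.mem_erase] at hf ⊢
      tauto
  by_cases hu : ∃ j ≤ p.len, p.vert j = u
  · obtain ⟨j, hj, hju⟩ := hu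
    have huv : u ≠ v := fun h => hloopless e (by rw [IsLoop, he, h]; exact Sym2.mk_isDiag_iff.2 rfl)
    obtain ⟨rfl, hodd⟩ := ha.eq_len_of_not_saturated
      (Nat.pos_of_ne_zero fun h => huv (by rw [← hju, ← hp₀, h])) hj
      (hju ▸ hfree u (he ▸ Sym2.mem_mk_left u v))
    obtain ⟨j₀, hj₀, g, y, hg, hgH, hy, hfree⟩ := exists_edge_off_path_of_isAlternating hloopless
      hconn hδ hnotEvenCycle hedge hH hH' hdisj heH he hp₀ hju ha hodd hCcard hCclosed
    exact card_add_card_add_one_le_nu2_of_cycle hH hH' hdisj heH hp hpe hp₀ hju hCH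
      (Finset.mem_insert_self e _) hCcard hCclosed hj₀ hg hgH hy hfree
  · push Not at hu
    exact card_add_card_add_one_le_nu2_of_path hH hH' hdisj heH he hp hpe hp₀ hCH
      (Finset.mem_insert_self e _) hCcard hCclosed hu

/-- If G is connected, δ(G) ≥ 2, G is not an even cycle, and no edge joins two
vertices of degree ≥ 3, then subdividing one edge once increases ν₂ by at least one. -/
theorem nu2_subdivideOnce_ge
    (G : Multigraph) (hloopless : G.Loopless) (hconn : G.Connected)
    (hδ : ∀ v : G.V, 2 ≤ G.deg v)
    (hnotEvenCycle : ¬ ((∀ v : G.V, G.deg v = 2) ∧ Even (Fintype.card G.E)))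
    (hedge : ∀ f : G.E, ∀ a b : G.V, G.ends f = s(a, b) → ¬ (3 ≤ G.deg a ∧ 3 ≤ G.deg b))
    (e : G.E) (u v : G.V) (he : G.ends e = s(u, v)) :
    (G.subdivideOnce e u v).nu2 ≥ G.nu2 + 1 := by
  obtain ⟨H, H', hH, hH', hdisj, hsum⟩ := G.exists_card_add_card_eq_nu2
  rw [← hsum, ge_iff_le]
  by_cases heH : e ∈ H
  · exact card_add_card_add_one_le_nu2_of_mem hloopless hconn hδ hnotEvenCycle hedge
      hH hH' hdisj heH he
  by_cases heH' : e ∈ H'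
  · rw [add_comm H.card]
    exact card_add_card_add_one_le_nu2_of_mem hloopless hconn hδ hnotEvenCycle hedge
      hH' hH hdisj.symm heH' he
  exact card_add_card_add_one_le_nu2_of_not_mem hedge hH hH' hdisj heH heH' he

end Multigraph
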